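/- arXiv:2506.23654 — 2 statements merged into one kernel-verified Lean document; each statement's English description precedes it below -/
import Mathlib

section
/- Let p : 𝒫^{<ω}(X) → U be an order-reversal into an ultrafilter U on I that possesses a support Φ = (Φ_i)_{i∈I}. Then the map p_Φ(Θ) := {i ∈ I : Θ ⊆ Φ_i} is an anti-additive, locally finite order-reversal into U with p_Φ ≤ p, and Φ is also a support of p_Φ. -/
theorem Filter.setOf_finset_subset_mem {I X : Type*} {f : Filter I} {Φ : I → Finset X}
    (h : ∀ θ, {i | θ ∈ Φ i} ∈ f) (Θ : Finset X) : {i | Θ ⊆ Φ i} ∈ f :=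
  (Filter.eventually_all_finset Θ).2 fun θ _ => h θ

theorem stmt13_general {I X : Type*} [DecidableEq X] (U : Ultrafilter I)
    (p : Finset X → Set I)
    (hrev : ∀ s t : Finset X, s ⊆ t → p t ⊆ p s)
    (Φ : I → Finset X) (hsupp1 : ∀ i, i ∈ p (Φ i))
    (hsupp2 : ∀ θ : X, {i | θ ∈ Φ i} ∈ U) :
    let pΦ : Finset X → Set I := fun Θ => {i | Θ ⊆ Φ i}
    (∀ Θ, pΦ Θ ∈ U) ∧
    (∀ Θ Θ', pΦ (Θ ∪ Θ') = pΦ Θ ∩ pΦ Θ') ∧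
    (∀ i, ∃ N : ℕ, ∀ Θ, i ∈ pΦ Θ → Θ.card ≤ N) ∧
    (∀ s t : Finset X, s ⊆ t → pΦ t ⊆ pΦ s) ∧
    (∀ Θ, pΦ Θ ⊆ p Θ) ∧
    (∀ i, i ∈ pΦ (Φ i)) := by
  intro pΦ
  refine ⟨Filter.setOf_finset_subset_mem hsupp2, fun Θ Θ' => ?_,
    fun i => ⟨(Φ i).card, fun Θ => Finset.card_le_card⟩, fun s t hst i hi => hst.trans hi,
    fun Θ i hi => hrev Θ (Φ i) hi (hsupp1 i), fun i => Finset.Subset.refl (Φ i)⟩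
  ext i
  exact Finset.union_subset_iff

/-- If an order-reversal `p : 𝒫^{<ω}(X) → U` possesses a support `Φ`, then
`p_Φ(Θ) := {i : Θ ⊆ Φ_i}` is an anti-additive, locally finite order-reversal into
`U` with `p_Φ ≤ p`, and `Φ` is also a support of `p_Φ`. -/
theorem stmt13 {I X : Type*} [DecidableEq X] (U : Ultrafilter I)
    (p : Finset X → Set I)
    (hpU : ∀ s, p s ∈ U) (hrev : ∀ s t : Finset X, s ⊆ t → p t ⊆ p s)
    (Φ : I → Finset X) (hsupp1 : ∀ i, i ∈ p (Φ i))
    (hsupp2 : ∀ θ : X, {i | θ ∈ Φ i} ∈ U) :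
    let pΦ : Finset X → Set I := fun Θ => {i | Θ ⊆ Φ i}
    (∀ Θ, pΦ Θ ∈ U) ∧
    (∀ Θ Θ', pΦ (Θ ∪ Θ') = pΦ Θ ∩ pΦ Θ') ∧
    (∀ i, ∃ N : ℕ, ∀ Θ, i ∈ pΦ Θ → Θ.card ≤ N) ∧
    (∀ s t : Finset X, s ⊆ t → pΦ t ⊆ pΦ s) ∧
    (∀ Θ, pΦ Θ ⊆ p Θ) ∧
    (∀ i, i ∈ pΦ (Φ i)) :=
  stmt13_general U p hrev Φ hsupp1 hsupp2
end

section
/- For every infinite cardinal κ there exists a countably incomplete ultrafilter on κ which is κ⁺-good: for every order-reversal p : 𝒫^{<ω}(κ) → U there is an anti-additive q : 𝒫^{<ω}(κ) → U with q ≤ p. -/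
/-!
Kunen's construction, with `κ = #α`. By the Engelking–Karłowicz theorem there are functions
`G A : α → Finset α × ℕ`, one for each `A : Set α`, that are independent: any finitely many of
them take any prescribed values simultaneously. A filter is built by a recursion of length `2 ^ κ`
that keeps all but `< 2 ^ κ` of these functions independent modulo the filter. Each stage decides
one set `X` and, given an order-reversal `p` whose values already lie in the filter, spends one
unused function `f = (G A ·).1` on the anti-additive refinement
`q s = {i | s ⊆ f i ∧ i ∈ p (f i)}`; a stage uses up only finitely many functions. Every task
`(p, X)` recurs cofinally often and `κ < cof (2 ^ κ)`, so each order-reversal into the final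
ultrafilter is handled at a stage where all its values are already in the filter. The function
`G ∅` is never spent: the filter contains `{i | n ≤ (G ∅ i).2}` for every `n`, and these sets
have empty intersection.
-/

open Cardinal Filter Set Function
open scoped symmDiff

theorem Filter.exists_ultrafilter_coe_eq {α : Type*} {f : Filter α} [f.NeBot]
    (h : ∀ s, s ∈ f ∨ sᶜ ∈ f) : ∃ U : Ultrafilter α, ↑U = f :=
  ⟨.ofComplNotMemIff f fun s => ⟨(h s).resolve_right, compl_notMem⟩, rfl⟩

namespace GoodUltrafilter

universe u

theorem exists_isCofinal_fiber {c : Cardinal.{u}} (hc : ℵ₀ ≤ c) {T : Type u} [Nonempty T]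
    (hT : #T ≤ c) : ∃ e : c.ord.ToType → T, ∀ t, IsCofinal (e ⁻¹' {t}) := by
  obtain ⟨E⟩ : Nonempty (c.ord.ToType ≃ T × c.ord.ToType) := by
    rw [← Cardinal.eq, mk_prod, lift_id, lift_id, mk_ord_toType, mul_eq_right hc hT (mk_ne_zero T)]
  refine ⟨fun x => (E x).1, fun t => by_contra fun h => ?_⟩
  obtain ⟨x, hx⟩ := not_isCofinal_iff.1 h
  have hle : c ≤ #(Iio x) :=
    calc c = #c.ord.ToType := (mk_ord_toType c).symm
      _ ≤ #(Iio x) := mk_le_of_injective (f := fun d => ⟨E.symm (t, d), hx _ (by simp)⟩)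
          fun a b hab => by simpa using congrArg Subtype.val hab
  exact hle.not_gt (by simpa using mk_Iio_lt x)

theorem exists_forall_lt_of_mk_lt_cof {c : Cardinal.{u}} {ι : Type u} (φ : ι → c.ord.ToType)
    (h : #ι < c.ord.cof) : ∃ x, ∀ i, φ i < x := by
  have : ¬IsCofinal (range φ) := fun hφ =>
    ((Order.cof_le hφ).trans mk_range_le).not_gt (by rwa [Ordinal.cof_toType])
  simpa using not_isCofinal_iff.1 this

section Independence

variable {ι α β δ : Type*}

def IsIndependent (G : ι → α → β) : Prop :=
  ∀ (T : Finset ι) (v : ι → β), ∃ i, ∀ A ∈ T, G A i = v A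

def IndepModulo (G : ι → α → β) (F : Filter α) (K : Set ι) : Prop :=
  ∀ X ∈ F, ∀ T : Finset ι, ↑T ⊆ K → ∀ v : ι → β, ∃ i ∈ X, ∀ A ∈ T, G A i = v A

variable {G : ι → α → β} {F F' : Filter α} {K K' : Set ι}

theorem IndepModulo.mono (h : IndepModulo G F K) (hF : F ≤ F') (hK : K' ⊆ K) :
    IndepModulo G F' K' :=
  fun X hX T hT v => h X (hF hX) T (hT.trans hK) v

theorem IndepModulo.neBot [Nonempty β] (h : IndepModulo G F K) : F.NeBot := by
  refine forall_mem_nonempty_iff_neBot.1 fun X hX => ?_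
  obtain ⟨i, hi, -⟩ := h X hX ∅ (by simp) fun _ => Classical.arbitrary β
  exact ⟨i, hi⟩

theorem IsIndependent.indepModulo_comap (hG : IsIndependent G) (a : ι) {γ : Type*}
    {φ : β → γ} (hφ : Surjective φ) {l : Filter γ} [l.NeBot] :
    IndepModulo G (comap (φ ∘ G a) l) {a}ᶜ := by
  classical
  rintro X ⟨Y, hY, hYX⟩ T hT v
  obtain ⟨y, hy⟩ := Filter.nonempty_of_mem hY
  obtain ⟨b, rfl⟩ := hφ y
  obtain ⟨i, hi⟩ := hG (insert a T) (update v a b)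
  refine ⟨i, hYX ?_, fun A hA => ?_⟩
  · simpa [hi a (Finset.mem_insert_self a T)] using hy
  · rw [hi A (Finset.mem_insert_of_mem hA), update_of_ne (hT hA)]

theorem IndepModulo.exists_inf_principal (h : IndepModulo G F K) (X : Set α) :
    ∃ Y ∈ ({X, Xᶜ} : Set (Set α)), ∃ R : Set ι, R.Finite ∧ IndepModulo G (F ⊓ 𝓟 Y) (K \ R) := by
  classical
  by_cases hX : IndepModulo G (F ⊓ 𝓟 X) K
  · exact ⟨X, .inl rfl, ∅, finite_empty, hX.mono le_rfl sdiff_subset⟩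
  simp only [IndepModulo, not_forall] at hX
  obtain ⟨Z, hZ, T, hT, v, hv⟩ := hX
  rw [mem_inf_principal] at hZ
  refine ⟨Xᶜ, .inr rfl, T, T.finite_toSet, fun W hW T' hT' v' => ?_⟩
  rw [mem_inf_principal] at hW
  have hTT' : ↑(T ∪ T') ⊆ K := by
    rw [Finset.coe_union]; exact union_subset hT fun A hA => (hT' hA).1
  obtain ⟨i, ⟨hiZ, hiW⟩, hi⟩ := h _ (inter_mem hZ hW) (T ∪ T') hTT' (T.piecewise v v')
  -- `i` realizes `v` on `T`, which no point of `X ∩ Z` does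
  have hiX : i ∉ X := fun hiX => hv ⟨i, hiZ hiX, fun A hA => by
    rw [hi A (Finset.mem_union_left _ hA), Finset.piecewise_eq_of_mem _ _ _ hA]⟩
  refine ⟨i, hiW hiX, fun A hA => ?_⟩
  rw [hi A (Finset.mem_union_right _ hA), Finset.piecewise_eq_of_notMem _ _ _ (hT' hA).2]

theorem IndepModulo.exists_antiAdditive_le [DecidableEq δ] (h : IndepModulo G F K) {a : ι}
    (ha : a ∈ K) {π : β → Finset δ} (hπ : Surjective π) {p : Finset δ → Set α}
    (hp : Antitone p) (hpF : ∀ s, p s ∈ F) :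
    ∃ q : Finset δ → Set α, (∀ s t, q (s ∪ t) = q s ∩ q t) ∧ q ≤ p ∧
      IndepModulo G (F ⊓ ⨅ s, 𝓟 (q s)) (K \ {a}) := by
  classical
  set f : α → Finset δ := fun i => π (G a i)
  set q : Finset δ → Set α := fun s => {i | s ⊆ f i ∧ i ∈ p (f i)}
  have hq : ∀ s t, q (s ∪ t) = q s ∩ q t := fun s t => by
    ext i; simp only [q, mem_ofPred_eq, mem_inter_iff, Finset.union_subset_iff]; tauto
  refine ⟨q, hq, fun s i hi => hp hi.1 hi.2, fun X hX T hT v => ?_⟩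
  have hdir : Directed (· ≥ ·) fun s => 𝓟 (q s) := fun s t =>
    ⟨s ∪ t, by simp [hq]⟩
  obtain ⟨Y, hY, W, hW, rfl⟩ := mem_inf_iff.1 hX
  obtain ⟨s, hs⟩ := (mem_iInf_of_directed hdir W).1 hW
  obtain ⟨b, hb⟩ := hπ s
  have haT : ↑(insert a T) ⊆ K := by
    rw [Finset.coe_insert]; exact insert_subset ha (hT.trans sdiff_subset)
  obtain ⟨i, ⟨hiY, hip⟩, hi⟩ := h _ (inter_mem hY (hpF s)) (insert a T) haT (update v a b)
  have hfi : f i = s := by simp [f, hi a (Finset.mem_insert_self a T), hb]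
  refine ⟨i, ⟨hiY, hs ⟨hfi.ge, hfi ▸ hip⟩⟩, fun A hA => ?_⟩
  rw [hi A (Finset.mem_insert_of_mem hA), update_of_ne (hT hA).2]

structure IsStep [DecidableEq δ] (G : ι → α → β) (F : Filter α) (K : Set ι)
    (p : Finset δ → Set α) (X : Set α) (F' : Filter α) (R : Set ι) : Prop where
  le : F' ≤ F
  finite : R.Finite
  indepModulo : IndepModulo G F' (K \ R)
  decides : X ∈ F' ∨ Xᶜ ∈ F'
  refines : Antitone p → (∀ s, p s ∈ F) →
    ∃ q : Finset δ → Set α, (∀ s t, q (s ∪ t) = q s ∩ q t) ∧ q ≤ p ∧ ∀ s, q s ∈ F'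

theorem IndepModulo.exists_isStep [DecidableEq δ] (h : IndepModulo G F K) (hK : K.Infinite)
    {π : β → Finset δ} (hπ : Surjective π) (p : Finset δ → Set α) (X : Set α) :
    ∃ F' R, IsStep G F K p X F' R := by
  obtain ⟨Y, hY, R, hR, hFY⟩ := h.exists_inf_principal X
  have hdec : X ∈ F ⊓ 𝓟 Y ∨ Xᶜ ∈ F ⊓ 𝓟 Y := by
    rcases hY with rfl | rfl
    exacts [.inl (mem_inf_of_right (mem_principal_self _)),
      .inr (mem_inf_of_right (mem_principal_self _))]
  by_cases hp : Antitone p ∧ ∀ s, p s ∈ F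
  · obtain ⟨a, ha⟩ := (hK.sdiff hR).nonempty
    obtain ⟨q, hq, hqp, hFq⟩ :=
      hFY.exists_antiAdditive_le ha hπ hp.1 fun s => mem_inf_of_left (hp.2 s)
    refine ⟨F ⊓ 𝓟 Y ⊓ ⨅ s, 𝓟 (q s), R ∪ {a}, ⟨inf_le_left.trans inf_le_left,
      hR.union (finite_singleton a), by rwa [← sdiff_sdiff], ?_, fun _ _ => ⟨q, hq, hqp, ?_⟩⟩⟩
    · exact hdec.imp mem_inf_of_left mem_inf_of_left
    · exact fun s => mem_inf_of_right (mem_iInf_of_mem s (mem_principal_self _))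
  · exact ⟨F ⊓ 𝓟 Y, R, ⟨inf_le_left, hR, hFY, hdec, fun h₁ h₂ => absurd ⟨h₁, h₂⟩ hp⟩⟩

end Independence

theorem exists_finset_injOn_preimage_val {α : Type*} (T : Finset (Set α)) :
    ∃ s : Finset α, InjOn (fun A => ((↑) : s → α) ⁻¹' A) T := by
  classical
  cases isEmpty_or_nonempty α
  · exact ⟨∅, fun A _ B _ _ => Subsingleton.elim A B⟩
  choose! c hc using fun A B : Set α => (symmDiff_nonempty (s := A) (t := B)).2
  refine ⟨T.biUnion fun A => T.image (c A), fun A hA B hB hAB => by_contra fun hne => ?_⟩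
  have hmem : c A B ∈ T.biUnion fun A => T.image (c A) :=
    Finset.mem_biUnion.2 ⟨A, hA, Finset.mem_image_of_mem _ hB⟩
  have hiff : c A B ∈ A ↔ c A B ∈ B := by
    simpa using congrArg (⟨c A B, hmem⟩ ∈ ·) hAB
  have := hc A B hne
  rw [mem_symmDiff] at this
  tauto

/-- Engelking–Karłowicz. A point codes a finite set `s` and a value for each trace `A ∩ s`. -/
theorem exists_isIndependent {α β : Type u} [Infinite α] [Nonempty β] (hβ : #β ≤ #α) :
    ∃ G : Set α → α → β, IsIndependent G := by
  have hJ : #(Σ s : Finset α, Set s → β) ≤ #α := by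
    rw [mk_sigma]
    calc (sum fun s : Finset α => #(Set s → β)) ≤ sum fun _ : Finset α => #α :=
          sum_le_sum _ _ fun s => by
            rw [← power_def]
            exact (power_le_power_right hβ).trans (pow_le (aleph0_le_mk α) (lt_aleph0_of_finite _))
      _ = #α := by rw [sum_const', mk_finset_of_infinite, mul_eq_self (aleph0_le_mk α)]
  obtain ⟨emb⟩ := hJ
  have hg := invFun_surjective emb.injective
  refine ⟨fun A i => (invFun emb i).2 ((↑) ⁻¹' A), fun T v => ?_⟩
  obtain ⟨s, hs⟩ := exists_finset_injOn_preimage_val T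
  obtain ⟨i, hi⟩ := hg ⟨s, fun S => v (invFunOn (fun A => ((↑) : s → α) ⁻¹' A) T S)⟩
  refine ⟨i, fun A hA => ?_⟩
  dsimp only
  generalize invFun emb i = j at hi
  subst hi
  exact congrArg v (hs.leftInvOn_invFunOn hA)

abbrev Stage (α : Type u) : Type u := (2 ^ #α : Cardinal.{u}).ord.ToType

abbrev Task (α : Type u) : Type u := (Finset α → Set α) × Set α

theorem mk_finset_prod_nat (α : Type u) [Infinite α] : #(Finset α × ℕ) = #α := by
  simp only [mk_prod, lift_uzero, mk_nat, lift_aleph0, mk_finset_of_infinite]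
  exact mul_aleph0_eq (aleph0_le_mk α)

theorem mk_task (α : Type u) [Infinite α] : #(Task α) = 2 ^ #α := by
  have hα := aleph0_le_mk α
  rw [mk_prod, lift_id, lift_id, ← power_def, mk_set, mk_finset_of_infinite, ← power_mul,
    mul_eq_self hα, mul_eq_self (hα.trans (cantor _).le)]

instance (α : Type u) : Nonempty (Stage α) := nonempty_ord_toType (power_ne_zero _ two_ne_zero)

section Construction

variable {α : Type u} [DecidableEq α] (G : Set α → α → Finset α × ℕ) (e : Stage α → Task α)

def baseFilter : Filter α := comap (fun i => (G ∅ i).2) atTop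

open Classical in
/-- The fallback `(D, ∅)` is never used along the construction (`indepModulo_filterBefore`). -/
noncomputable def step (D : Filter α) (K : Set (Set α)) (x : Task α) : Filter α × Set (Set α) :=
  if h : IndepModulo G D K ∧ K.Infinite then
    have hx := h.1.exists_isStep h.2 Prod.fst_surjective x.1 x.2
    (hx.choose, hx.choose_spec.choose)
  else (D, ∅)

variable {G} in
theorem isStep_step {D : Filter α} {K : Set (Set α)} (h : IndepModulo G D K) (hK : K.Infinite)
    (x : Task α) : IsStep G D K x.1 x.2 (step G D K x).1 (step G D K x).2 := by
  rw [step, dif_pos ⟨h, hK⟩]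
  exact (h.exists_isStep hK Prod.fst_surjective x.1 x.2).choose_spec.choose_spec

theorem step_le (D : Filter α) (K : Set (Set α)) (x : Task α) : (step G D K x).1 ≤ D := by
  by_cases h : IndepModulo G D K ∧ K.Infinite
  · exact (isStep_step h.1 h.2 x).le
  · rw [step, dif_neg h]

theorem step_finite (D : Filter α) (K : Set (Set α)) (x : Task α) : (step G D K x).2.Finite := by
  by_cases h : IndepModulo G D K ∧ K.Infinite
  · exact (isStep_step h.1 h.2 x).finite
  · rw [step, dif_neg h]; exact finite_empty

noncomputable def stage : Stage α → Filter α × Set (Set α) :=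
  WellFoundedLT.fix fun γ prev =>
    step G (baseFilter G ⊓ ⨅ β : Iio γ, (prev β β.2).1)
      (insert ∅ (⋃ β : Iio γ, (prev β β.2).2))ᶜ (e γ)

noncomputable def filterBefore (γ : Stage α) : Filter α :=
  baseFilter G ⊓ ⨅ β : Iio γ, (stage G e β).1

/-- The index `∅` is reserved for `baseFilter`. -/
noncomputable def indicesBefore (γ : Stage α) : Set (Set α) :=
  (insert ∅ (⋃ β : Iio γ, (stage G e β).2))ᶜ

theorem stage_eq (γ : Stage α) :
    stage G e γ = step G (filterBefore G e γ) (indicesBefore G e γ) (e γ) :=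
  WellFoundedLT.fix_eq _ γ

theorem stage_le_filterBefore (γ : Stage α) : (stage G e γ).1 ≤ filterBefore G e γ := by
  rw [stage_eq]; exact step_le G _ _ _

theorem filterBefore_le_stage {β γ : Stage α} (h : β < γ) : filterBefore G e γ ≤ (stage G e β).1 :=
  inf_le_right.trans (iInf_le (fun β : Iio γ => (stage G e β).1) ⟨β, h⟩)

theorem stage_le_baseFilter (γ : Stage α) : (stage G e γ).1 ≤ baseFilter G :=
  (stage_le_filterBefore G e γ).trans inf_le_left

theorem antitone_stage : Antitone fun γ => (stage G e γ).1 := fun _ γ h =>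
  h.lt_or_eq.elim (fun h => (stage_le_filterBefore G e γ).trans (filterBefore_le_stage G e h))
    fun h => h ▸ le_rfl

theorem mem_filterBefore {γ : Stage α} {X : Set α} (hX : X ∈ filterBefore G e γ) :
    X ∈ baseFilter G ∨ ∃ β < γ, X ∈ (stage G e β).1 := by
  obtain ⟨Y, hY, W, hW, rfl⟩ := mem_inf_iff.1 hX
  cases isEmpty_or_nonempty (Iio γ)
  · rw [iInf_of_empty, mem_top] at hW
    rw [hW, inter_univ]
    exact .inl hY
  · have hdir : Directed (· ≥ ·) fun β : Iio γ => (stage G e β).1 :=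
      (antitone_stage G e).comp_monotone (Subtype.mono_coe _) |>.directed_ge
    obtain ⟨β, hβ⟩ := (mem_iInf_of_directed hdir W).1 hW
    exact .inr ⟨β, β.2, inter_mem (stage_le_baseFilter G e β hY) hβ⟩

theorem stage_finite (γ : Stage α) : (stage G e γ).2.Finite := by
  rw [stage_eq]; exact step_finite G _ _ _

theorem indicesBefore_subset {β γ : Stage α} (h : β < γ) :
    indicesBefore G e γ ⊆ indicesBefore G e β \ (stage G e β).2 := by
  simp only [indicesBefore, subset_def, Set.mem_sdiff, mem_compl_iff, mem_insert_iff, mem_iUnion,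
    not_or, not_exists]
  exact fun X hX => ⟨⟨hX.1, fun b => hX.2 ⟨b, b.2.trans h⟩⟩, hX.2 ⟨β, h⟩⟩

theorem indicesBefore_subset_compl (γ : Stage α) : indicesBefore G e γ ⊆ {∅}ᶜ :=
  compl_subset_compl.2 (singleton_subset_iff.2 (mem_insert _ _))

theorem indicesBefore_infinite [Infinite α] (γ : Stage α) : (indicesBefore G e γ).Infinite := by
  have hlt : ℵ₀ < 2 ^ #α := (aleph0_le_mk α).trans_lt (cantor _)
  have hunion : #(⋃ β : Iio γ, (stage G e β).2) ≤ #(Iio γ) * ℵ₀ :=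
    mk_iUnion_le_sum_mk.trans <|
      (sum_le_sum _ _ fun β : Iio γ => (stage_finite G e β).lt_aleph0.le).trans_eq (sum_const' _ _)
  have hsmall : #(insert ∅ (⋃ β : Iio γ, (stage G e β).2) : Set (Set α)) < #(Set α) := by
    rw [mk_set]
    calc _ ≤ #(⋃ β : Iio γ, (stage G e β).2) + 1 := mk_insert_le
      _ ≤ #(Iio γ) * ℵ₀ + 1 := add_le_add_left hunion 1
      _ < 2 ^ #α := add_lt_of_lt hlt.le (mul_lt_of_lt hlt.le (by simpa using mk_Iio_lt γ) hlt)
          (one_lt_aleph0.trans hlt)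
  rw [indicesBefore, ← infinite_coe_iff, infinite_iff, mk_compl_of_infinite _ hsmall]
  exact aleph0_le_mk _

noncomputable def limitFilter : Filter α := ⨅ γ, (stage G e γ).1

theorem mem_limitFilter {X : Set α} : X ∈ limitFilter G e ↔ ∃ γ, X ∈ (stage G e γ).1 :=
  mem_iInf_of_directed (antitone_stage G e).directed_ge X

theorem limitFilter_le_stage (γ : Stage α) : limitFilter G e ≤ (stage G e γ).1 :=
  iInf_le _ γ

theorem limitFilter_le_baseFilter : limitFilter G e ≤ baseFilter G :=
  (iInf_le _ (Classical.arbitrary _)).trans (stage_le_baseFilter G e _)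

variable {G}

theorem indepModulo_filterBefore [Infinite α] (hG : IsIndependent G) (γ : Stage α) :
    IndepModulo G (filterBefore G e γ) (indicesBefore G e γ) := by
  induction γ using WellFoundedLT.induction with
  | _ γ ih =>
  intro X hX
  rcases mem_filterBefore G e hX with hX | ⟨β, hβ, hX⟩
  · exact (hG.indepModulo_comap ∅ Prod.snd_surjective).mono le_rfl
      (indicesBefore_subset_compl G e γ) X hX
  · have hstep := isStep_step (ih β hβ) (indicesBefore_infinite G e β) (e β)
    rw [← stage_eq] at hstep
    exact hstep.indepModulo.mono le_rfl (indicesBefore_subset G e hβ) X hX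

theorem isStep_stage [Infinite α] (hG : IsIndependent G) (γ : Stage α) :
    IsStep G (filterBefore G e γ) (indicesBefore G e γ) (e γ).1 (e γ).2
      (stage G e γ).1 (stage G e γ).2 := by
  rw [stage_eq]
  exact isStep_step (indepModulo_filterBefore e hG γ) (indicesBefore_infinite G e γ) (e γ)

variable [Infinite α] (hG : IsIndependent G) (he : ∀ x, IsCofinal (e ⁻¹' {x}))
include hG

theorem limitFilter_neBot : (limitFilter G e).NeBot :=
  forall_mem_nonempty_iff_neBot.1 fun X hX => by
    obtain ⟨γ, hγ⟩ := (mem_limitFilter G e).1 hX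
    exact (isStep_stage e hG γ).indepModulo.neBot.nonempty_of_mem hγ

include he

theorem mem_or_compl_mem_limitFilter (X : Set α) : X ∈ limitFilter G e ∨ Xᶜ ∈ limitFilter G e := by
  obtain ⟨γ, hγ, -⟩ := he (fun _ => univ, X) (Classical.arbitrary _)
  have hdec := (isStep_stage e hG γ).decides
  rw [mem_preimage.1 hγ] at hdec
  exact hdec.imp (limitFilter_le_stage G e γ ·) (limitFilter_le_stage G e γ ·)

theorem exists_antiAdditive_le_limitFilter {p : Finset α → Set α} (hp : Antitone p)
    (hpU : ∀ s, p s ∈ limitFilter G e) :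
    ∃ q : Finset α → Set α,
      (∀ s t, q (s ∪ t) = q s ∩ q t) ∧ q ≤ p ∧ ∀ s, q s ∈ limitFilter G e := by
  choose φ hφ using fun s => (mem_limitFilter G e).1 (hpU s)
  obtain ⟨x, hx⟩ := exists_forall_lt_of_mk_lt_cof φ <| by
    rw [mk_finset_of_infinite]; exact lt_cof_ord_power (aleph0_le_mk α) one_lt_two
  -- a stage handling `p` after every `p s` has entered the filter
  obtain ⟨γ, hγ, hxγ⟩ := he (p, ∅) x
  have hrefines := (isStep_stage e hG γ).refines
  rw [mem_preimage.1 hγ] at hrefines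
  obtain ⟨q, hq, hqp, hqγ⟩ :=
    hrefines hp fun s => filterBefore_le_stage G e ((hx s).trans_le hxγ) (hφ s)
  exact ⟨q, hq, hqp, fun s => limitFilter_le_stage G e γ (hqγ s)⟩

end Construction

end GoodUltrafilter

open GoodUltrafilter

/-- For every infinite cardinal `κ` (represented by an infinite type `α`), there is
a countably incomplete ultrafilter on `κ` which is `κ⁺`-good: every order-reversal
`p : 𝒫^{<ω}(κ) → U` dominates an anti-additive map `q : 𝒫^{<ω}(κ) → U`. -/
theorem stmt19 {α : Type*} [Infinite α] [DecidableEq α] :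
    ∃ U : Ultrafilter α,
      (∃ A : ℕ → Set α, (∀ n, A n ∈ U) ∧ (⋂ n, A n) ∉ U) ∧
      ∀ p : Finset α → Set α, (∀ s, p s ∈ U) →
        (∀ s t : Finset α, s ⊆ t → p t ⊆ p s) →
        ∃ q : Finset α → Set α, (∀ s, q s ∈ U) ∧
          (∀ s t : Finset α, q (s ∪ t) = q s ∩ q t) ∧ ∀ s, q s ⊆ p s := by
  obtain ⟨G, hG⟩ := exists_isIndependent (mk_finset_prod_nat α).le
  obtain ⟨e, he⟩ := exists_isCofinal_fiber ((aleph0_le_mk α).trans (cantor _).le) (mk_task α).le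
  have := limitFilter_neBot e hG
  obtain ⟨U, hU⟩ := Filter.exists_ultrafilter_coe_eq (mem_or_compl_mem_limitFilter e hG he)
  have hmem : ∀ X, X ∈ U ↔ X ∈ limitFilter G e := fun X => by rw [← Ultrafilter.mem_coe, hU]
  refine ⟨U, ⟨fun n => {i | n ≤ (G ∅ i).2}, fun n => ?_, ?_⟩, fun p hpU hp => ?_⟩
  · exact (hmem _).2 (limitFilter_le_baseFilter G e (preimage_mem_comap (Ici_mem_atTop n)))
  · convert U.empty_notMem
    exact eq_empty_of_forall_notMem fun i hi => (mem_iInter.1 hi ((G ∅ i).2 + 1)).not_gt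
      (Nat.lt_succ_self _)
  · obtain ⟨q, hq, hqp, hqU⟩ :=
      exists_antiAdditive_le_limitFilter e hG he (fun s t h => hp s t h) fun s => (hmem _).1 (hpU s)
    exact ⟨q, fun s => (hmem _).2 (hqU s), hq, hqp⟩
end
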